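/- Let R be a commutative ring, m ∈ R, n ≥ 1, and let T_n(m) be the generalized Fibonacci matrix with parameter m. Let w ∈ R^n be the vector with j-th coordinate w_j = (-1)^{n+1-j}·U_{n-j} for 1 ≤ j ≤ n, i.e. w = ((-1)^n U_{n-1}, (-1)^{n-1} U_{n-2}, …, −U_0)^t. Then for every e ≥ 0 and every 1 ≤ i ≤ n, the i-th coordinate of T_n(m)^{e+1}·w equals U_{(n-1)e + i - 1}; that is, T_n(m)^{e+1}·w = (U_{(n-1)e}, U_{(n-1)e+1}, …, U_{(n-1)(e+1)})^t. -/
import Mathlib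


/-- The generalized Fibonacci sequence with parameter `m`:
`U_0 = 0`, `U_1 = 1`, `U_{e+1} = m U_e + U_{e-1}`. -/
def genFibU {R : Type*} [CommRing R] (m : R) : ℕ → R
  | 0 => 0
  | 1 => 1
  | e + 2 => m * genFibU m (e + 1) + genFibU m e

/-- The `n × n` generalized Fibonacci matrix `T_n(m)`, with 1-based `(i,j)` entry
`m^{i+j-n-1} C(i-1, n-j)` when `i + j ≥ n + 1` and `0` otherwise. -/
def genFibMatrix {R : Type*} [CommRing R] (m : R) (n : ℕ) :
    Matrix (Fin n) (Fin n) R :=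
  Matrix.of fun i j =>
    if n ≤ i.val + j.val + 1 then
      m ^ (i.val + j.val + 1 - n) * (Nat.choose i.val (n - 1 - j.val) : R)
    else 0

section
variable {R : Type*} [CommRing R] (m : R)

/-- Extension of `genFibU` to integer indices. -/
def genFibZ (k : ℤ) : R :=
  if 0 ≤ k then genFibU m k.toNat
  else (-1) ^ ((-k).toNat + 1) * genFibU m (-k).toNat

lemma genFibZ_ofNat (k : ℕ) : genFibZ m (k : ℤ) = genFibU m k := by
  simp [genFibZ]

lemma genFibZ_neg (k : ℕ) : genFibZ m (-(k : ℤ)) = (-1) ^ (k + 1) * genFibU m k := by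
  rcases Nat.eq_zero_or_pos k with h | h
  · subst h; simp [genFibZ, genFibU]
  · rw [genFibZ, if_neg (by omega)]
    simp

lemma genFibZ_rec (k : ℤ) :
    genFibZ m (k + 2) = m * genFibZ m (k + 1) + genFibZ m k := by
  obtain ⟨a, rfl | rfl⟩ := Int.eq_nat_or_neg k
  · have h1 : ((a : ℤ) + 2) = ((a + 2 : ℕ) : ℤ) := by push_cast; ring
    have h2 : ((a : ℤ) + 1) = ((a + 1 : ℕ) : ℤ) := by push_cast; ring
    rw [h1, h2, genFibZ_ofNat, genFibZ_ofNat, genFibZ_ofNat]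
    rfl
  · rcases a with _ | _ | _ | a
    · simp only [Nat.cast_zero, neg_zero, zero_add]
      have h1 : (2 : ℤ) = ((2 : ℕ) : ℤ) := by norm_num
      have h2 : (1 : ℤ) = ((1 : ℕ) : ℤ) := by norm_num
      rw [h1, h2, genFibZ_ofNat, genFibZ_ofNat]
      simp [genFibZ, genFibU]
    · have h1 : (-(1 : ℕ) : ℤ) + 2 = ((1 : ℕ) : ℤ) := by norm_num
      have h2 : (-(1 : ℕ) : ℤ) + 1 = ((0 : ℕ) : ℤ) := by norm_num
      rw [h1, h2, genFibZ_ofNat, genFibZ_ofNat, genFibZ_neg]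
      show (1 : R) = m * 0 + (-1) ^ 2 * 1
      ring
    · have h1 : (-(2 : ℕ) : ℤ) + 2 = ((0 : ℕ) : ℤ) := by norm_num
      have h2 : (-(2 : ℕ) : ℤ) + 1 = -((1 : ℕ) : ℤ) := by norm_num
      rw [h1, h2, genFibZ_ofNat, genFibZ_neg, genFibZ_neg]
      show (0 : R) = m * ((-1) ^ 2 * 1) + (-1) ^ 3 * (m * 1 + 0)
      ring
    · have h1 : (-(a + 3 : ℕ) : ℤ) + 2 = -((a + 1 : ℕ) : ℤ) := by push_cast; ring
      have h2 : (-(a + 3 : ℕ) : ℤ) + 1 = -((a + 2 : ℕ) : ℤ) := by push_cast; ring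
      rw [h1, h2, genFibZ_neg, genFibZ_neg, genFibZ_neg]
      have h3 : genFibU m (a + 3) = m * genFibU m (a + 2) + genFibU m (a + 1) := rfl
      rw [h3]
      ring

/-- The key binomial expansion identity. -/
lemma genFibZ_expand (i : ℕ) (s : ℤ) :
    genFibZ m (s + i) = ∑ k ∈ Finset.range (i + 1),
      (i.choose k : R) * m ^ (i - k) * genFibZ m (s - k) := by
  induction i generalizing s with
  | zero => simp
  | succ i ih =>
    have hrec : genFibZ m (s + (i + 1 : ℕ))
        = m * genFibZ m (s + i) + genFibZ m (s - 1 + i) := by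
      have h := genFibZ_rec m (s + i - 1)
      have e1 : s + i - 1 + 2 = s + ((i : ℕ) + 1 : ℕ) := by push_cast; ring
      have e2 : s + i - 1 + 1 = s + i := by ring
      have e3 : s + i - 1 = s - 1 + i := by ring
      rw [e1, e2, e3] at h
      exact h
    rw [hrec, ih (s - 1), ih s]
    rw [Finset.sum_range_succ'
      (fun k => ((i + 1).choose k : R) * m ^ (i + 1 - k) * genFibZ m (s - k))]
    have hsplit : ∀ k ∈ Finset.range (i + 1),
        (((i + 1).choose (k + 1) : R) * m ^ (i + 1 - (k + 1)) * genFibZ m (s - ((k + 1 : ℕ) : ℤ)))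
        = ((i.choose k : R) * m ^ (i - k) * genFibZ m (s - 1 - k))
          + ((i.choose (k + 1) : R) * m ^ (i - (k + 1)) * genFibZ m (s - ((k + 1 : ℕ) : ℤ))) * m := by
      intro k hk
      simp only [Finset.mem_range] at hk
      have hc : ((i + 1).choose (k + 1) : R) = (i.choose k : R) + (i.choose (k + 1) : R) := by
        rw [Nat.choose_succ_succ]; push_cast; ring
      have harg : s - 1 - (k : ℤ) = s - ((k + 1 : ℕ) : ℤ) := by push_cast; ring
      rcases Nat.lt_or_ge k i with hki | hki
      · have he : i + 1 - (k + 1) = i - k := by omega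
        have hp : m ^ (i - k) = m ^ (i - (k + 1)) * m := by
          rw [← pow_succ]
          congr 1
          omega
        rw [hc, harg, he]
        linear_combination ((i.choose (k + 1) : R) * genFibZ m (s - ((k + 1 : ℕ) : ℤ))) * hp
      · have hk' : k = i := by omega
        subst hk'
        rw [hc, harg, Nat.choose_succ_self]
        push_cast
        ring
    rw [Finset.sum_congr rfl hsplit, Finset.sum_add_distrib]
    have hfirst : m * ∑ k ∈ Finset.range (i + 1),
        (i.choose k : R) * m ^ (i - k) * genFibZ m (s - k)
        = (∑ k ∈ Finset.range (i + 1),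
            ((i.choose (k + 1) : R) * m ^ (i - (k + 1)) * genFibZ m (s - ((k + 1 : ℕ) : ℤ))) * m)
          + ((i + 1).choose 0 : R) * m ^ (i + 1 - 0) * genFibZ m (s - ((0 : ℕ) : ℤ)) := by
      rw [Finset.mul_sum,
        Finset.sum_range_succ'
          (fun k => m * ((i.choose k : R) * m ^ (i - k) * genFibZ m (s - k))),
        Finset.sum_range_succ
          (fun k => ((i.choose (k + 1) : R) * m ^ (i - (k + 1)) * genFibZ m (s - ((k + 1 : ℕ) : ℤ))) * m)]
      have hterm : ∀ k ∈ Finset.range i,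
          m * ((i.choose (k + 1) : R) * m ^ (i - (k + 1)) * genFibZ m (s - ((k + 1 : ℕ) : ℤ)))
          = ((i.choose (k + 1) : R) * m ^ (i - (k + 1)) * genFibZ m (s - ((k + 1 : ℕ) : ℤ))) * m :=
        fun k _ => by ring
      rw [Finset.sum_congr rfl hterm]
      simp only [Nat.choose_succ_self, Nat.cast_zero, zero_mul, Nat.choose_zero_right,
        Nat.cast_one, one_mul, Nat.sub_zero, add_zero]
      rw [pow_succ]
      ring
    rw [hfirst]
    ring

end

section
variable {R : Type*} [CommRing R] (m : R)

/-- One multiplication by `T_n(m)` shifts a window of the sequence by `n - 1`. -/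
lemma genFibMatrix_mulVec_genFibZ (n : ℕ) (hn : 1 ≤ n) (s : ℤ) (v : Fin n → R)
    (hv : ∀ j : Fin n, v j = genFibZ m (s + j.val)) (i : Fin n) :
    (genFibMatrix m n).mulVec v i = genFibZ m (s + ((n - 1 : ℕ) : ℤ) + i.val) := by
  have hterm : ∀ j : Fin n,
      genFibMatrix m n i j * v j
      = (i.val.choose (n - 1 - j.val) : R) * m ^ (i.val - (n - 1 - j.val))
          * genFibZ m ((s + ((n - 1 : ℕ) : ℤ)) - ((n - 1 - j.val : ℕ) : ℤ)) := by
    intro j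
    have hj : j.val < n := j.isLt
    rw [hv j]
    by_cases h : n ≤ i.val + j.val + 1
    · have hle : n - 1 - j.val ≤ i.val := by omega
      have he : i.val + j.val + 1 - n = i.val - (n - 1 - j.val) := by omega
      have harg : s + ((n - 1 : ℕ) : ℤ) - ((n - 1 - j.val : ℕ) : ℤ) = s + (j.val : ℤ) := by
        omega
      rw [genFibMatrix]
      simp only [Matrix.of_apply, if_pos h]
      rw [he, harg]
      ring
    · have hlt : i.val < n - 1 - j.val := by omega
      rw [genFibMatrix]
      simp only [Matrix.of_apply, if_neg h]
      rw [Nat.choose_eq_zero_of_lt hlt]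
      simp
  rw [Matrix.mulVec]
  show (∑ j, genFibMatrix m n i j * v j) = _
  rw [Finset.sum_congr rfl (fun j _ => hterm j)]
  rw [Fin.sum_univ_eq_sum_range
    (fun t => (i.val.choose (n - 1 - t) : R) * m ^ (i.val - (n - 1 - t))
      * genFibZ m ((s + ((n - 1 : ℕ) : ℤ)) - ((n - 1 - t : ℕ) : ℤ)))]
  rw [Finset.sum_range_reflect
    (fun t => (i.val.choose t : R) * m ^ (i.val - t)
      * genFibZ m ((s + ((n - 1 : ℕ) : ℤ)) - ((t : ℕ) : ℤ)))]
  have hsub : Finset.range (i.val + 1) ⊆ Finset.range n := by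
    intro x hx
    simp only [Finset.mem_range] at *
    have := i.isLt
    omega
  rw [← Finset.sum_subset hsub (fun x _ hx => by
    have : i.val < x := by simp only [Finset.mem_range] at hx ⊢; omega
    rw [Nat.choose_eq_zero_of_lt this]
    simp)]
  exact (genFibZ_expand m i.val (s + ((n - 1 : ℕ) : ℤ))).symm

end

/-- With `w = ((-1)^n U_{n-1}, (-1)^{n-1} U_{n-2}, …, -U_0)ᵗ`, the `i`-th coordinate
(1-based) of `T_n(m)^{e+1} ⬝ w` is `U_{(n-1)e + i - 1}`. -/
theorem genFibMatrix_pow_mulVec {R : Type*} [CommRing R] (m : R) (n : ℕ) (hn : 1 ≤ n)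
    (w : Fin n → R)
    (hw : ∀ j : Fin n, w j = (-1) ^ (n - j.val) * genFibU m (n - 1 - j.val)) :
    ∀ e : ℕ, ∀ i : Fin n,
      ((genFibMatrix m n) ^ (e + 1)).mulVec w i = genFibU m ((n - 1) * e + i.val) := by
  intro e
  induction e with
  | zero =>
    intro i
    rw [pow_one]
    have hv : ∀ j : Fin n, w j = genFibZ m (-(((n - 1 : ℕ)) : ℤ) + j.val) := by
      intro j
      have hj : j.val < n := j.isLt
      have harg : -(((n - 1 : ℕ)) : ℤ) + (j.val : ℤ) = -(((n - 1 - j.val : ℕ)) : ℤ) := by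
        omega
      rw [harg, genFibZ_neg, hw j]
      have : n - 1 - j.val + 1 = n - j.val := by omega
      rw [this]
    rw [genFibMatrix_mulVec_genFibZ m n hn _ w hv i]
    have harg : -(((n - 1 : ℕ)) : ℤ) + ((n - 1 : ℕ) : ℤ) + (i.val : ℤ)
        = (((n - 1) * 0 + i.val : ℕ) : ℤ) := by push_cast; ring
    rw [harg, genFibZ_ofNat]
  | succ e ih =>
    intro i
    rw [pow_succ']
    rw [← Matrix.mulVec_mulVec]
    have hv : ∀ j : Fin n, ((genFibMatrix m n) ^ (e + 1)).mulVec w j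
        = genFibZ m ((((n - 1) * e : ℕ) : ℤ) + j.val) := by
      intro j
      rw [ih j]
      have : (((n - 1) * e : ℕ) : ℤ) + (j.val : ℤ) = (((n - 1) * e + j.val : ℕ) : ℤ) := by
        push_cast; ring
      rw [this, genFibZ_ofNat]
    rw [genFibMatrix_mulVec_genFibZ m n hn _ _ hv i]
    have hnat : (n - 1) * e + (n - 1) + i.val = (n - 1) * (e + 1) + i.val := by ring
    have harg : (((n - 1) * e : ℕ) : ℤ) + ((n - 1 : ℕ) : ℤ) + (i.val : ℤ)
        = (((n - 1) * e + (n - 1) + i.val : ℕ) : ℤ) := by push_cast; ring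
    rw [harg, genFibZ_ofNat, hnat]
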